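/- For every t ≥ 1 with n_t^- ≥ 1 and n_t^+ ≥ 1, the recursively computed weight vector w_t = (S_t^- + S_t^+ + b·I)⁻¹ (z_t^- + z_t^+) equals the batch total-error-rate solution computed from all samples seen up to time t, namely w_t = ((1/n_t^-) Σ_{i ≤ t, y_i = -1} x_i x_iᵀ + (1/n_t^+) Σ_{i ≤ t, y_i = 1} x_i x_iᵀ + b·I)⁻¹ ((1/n_t^-) Σ_{i ≤ t, y_i = -1} y_i x_i + (1/n_t^+) Σ_{i ≤ t, y_i = 1} y_i x_i), and consequently w_t is the unique global minimizer of the objective J_t(w) = (1/(2 n_t^-)) Σ_{i ≤ t, y_i = -1} (y_i − wᵀ x_i)² + (1/(2 n_t^+)) Σ_{i ≤ t, y_i = 1} (y_i − wᵀ x_i)² + (b/2) ‖w‖². -/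

import Mathlib

open Matrix Finset

/-!
On its own class the gain `(1 ∓ y_t) / (2 n_t^∓)` equals `1 / n_t^∓`, and off it it vanishes, so
each of the four recursions is a running mean and unrolls to the class-wise batch average.
The batch matrix `A` is positive definite thanks to `b I`, and `J_t` is `u ↦ ½ uᵀAu − uᵀz` up to a
constant; completing the square, `J_t u = J_t w + ½ (u − w)ᵀA(u − w)` for `w = A⁻¹z`.
-/

section RunningMean

variable {M : Type*} [AddCommGroup M] [Module ℝ M]

theorem inv_smul_add_inv_succ_smul_sub {m : ℕ} {A : M} (hA : m = 0 → A = 0) (v : M) :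
    (m : ℝ)⁻¹ • A + ((m + 1 : ℕ) : ℝ)⁻¹ • (v - (m : ℝ)⁻¹ • A)
      = ((m + 1 : ℕ) : ℝ)⁻¹ • (v + A) := by
  rcases Nat.eq_zero_or_pos m with rfl | hm
  · simp [hA rfl]
  · have hm' : (m : ℝ) ≠ 0 := by positivity
    push_cast
    match_scalars <;> field_simp
    ring

theorem filter_Icc_one_succ (p : ℕ → Prop) [DecidablePred p] (k : ℕ) :
    (Icc 1 (k + 1)).filter p
      = if p (k + 1) then insert (k + 1) ((Icc 1 k).filter p) else (Icc 1 k).filter p := by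
  rw [← insert_Icc_right_eq_Icc_add_one (by omega), filter_insert]

theorem running_mean_eq_mean (p : ℕ → Prop) [DecidablePred p] (v : ℕ → M) (n : ℕ → ℕ)
    (hn : ∀ t, n t = ((Icc 1 t).filter p).card)
    (c : ℕ → ℝ) (hc : ∀ t, 1 ≤ t → c t = if p t then (n t : ℝ)⁻¹ else 0)
    (S : ℕ → M) (hS0 : S 0 = 0)
    (hS : ∀ t, 1 ≤ t → S t = S (t - 1) + c t • (v t - S (t - 1))) (t : ℕ) :
    S t = (n t : ℝ)⁻¹ • ∑ i ∈ (Icc 1 t).filter p, v i := by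
  induction t with
  | zero => simp [hS0]
  | succ k ih =>
    rw [hS (k + 1) k.succ_pos, Nat.add_sub_cancel, hc (k + 1) k.succ_pos, ih,
      filter_Icc_one_succ]
    by_cases hp : p (k + 1)
    · have hcount : n (k + 1) = n k + 1 := by
        rw [hn, hn, filter_Icc_one_succ, if_pos hp, card_insert_of_notMem (by simp)]
      have hempty : n k = 0 → ∑ i ∈ (Icc 1 k).filter p, v i = 0 := fun h0 => by
        rw [card_eq_zero.mp ((hn k).symm.trans h0), sum_empty]
      rw [if_pos hp, if_pos hp, sum_insert (by simp), hcount,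
        inv_smul_add_inv_succ_smul_sub hempty]
    · have hcount : n (k + 1) = n k := by rw [hn, hn, filter_Icc_one_succ, if_neg hp]
      simp [hp, hcount]

end RunningMean

theorem one_sub_div_two_mul_eq_ite {y : ℝ} (hy : y = -1 ∨ y = 1) (n : ℝ) :
    (1 - y) / (2 * n) = if y = -1 then n⁻¹ else 0 := by
  rcases hy with rfl | rfl
  · rw [if_pos rfl, sub_neg_eq_add, one_add_one_eq_two, div_mul_cancel_left₀ two_ne_zero]
  · norm_num

theorem one_add_div_two_mul_eq_ite {y : ℝ} (hy : y = -1 ∨ y = 1) (n : ℝ) :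
    (1 + y) / (2 * n) = if y = 1 then n⁻¹ else 0 := by
  rcases hy with rfl | rfl
  · norm_num
  · rw [if_pos rfl, one_add_one_eq_two, div_mul_cancel_left₀ two_ne_zero]

namespace Matrix

variable {n : Type*} [Fintype n]

theorem posSemidef_sum_vecMulVec_self {ι : Type*} (s : Finset ι) (x : ι → n → ℝ) :
    (∑ i ∈ s, vecMulVec (x i) (x i)).PosSemidef :=
  posSemidef_sum s fun i _ => by simpa using posSemidef_vecMulVec_self_star (x i)

theorem sum_sq_sub_dotProduct {ι : Type*} (s : Finset ι) (x : ι → n → ℝ) (y : ι → ℝ)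
    (u : n → ℝ) :
    ∑ i ∈ s, (y i - u ⬝ᵥ x i) ^ 2
      = u ⬝ᵥ ((∑ i ∈ s, vecMulVec (x i) (x i)) *ᵥ u) - 2 * (u ⬝ᵥ ∑ i ∈ s, y i • x i)
        + ∑ i ∈ s, y i ^ 2 := by
  simp only [sum_mulVec, dotProduct_sum, ← sum_sub_distrib, ← sum_add_distrib, mul_sum,
    vecMulVec_mulVec, dotProduct_smul, op_smul_eq_smul, smul_eq_mul]
  refine sum_congr rfl fun i _ => ?_
  rw [dotProduct_comm (x i) u]
  ring

theorem IsHermitian.quadratic_complete_square {A : Matrix n n ℝ} (hA : A.IsHermitian)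
    {w z : n → ℝ} (hw : A *ᵥ w = z) (u : n → ℝ) :
    u ⬝ᵥ (A *ᵥ u) / 2 - u ⬝ᵥ z
      = w ⬝ᵥ (A *ᵥ w) / 2 - w ⬝ᵥ z + (u - w) ⬝ᵥ (A *ᵥ (u - w)) / 2 := by
  have hsymm : w ⬝ᵥ (A *ᵥ u) = u ⬝ᵥ z := by
    rw [dotProduct_mulVec, ← mulVec_transpose, ← conjTranspose_eq_transpose_of_trivial,
      hA.eq, dotProduct_comm, hw]
  simp only [mulVec_sub, dotProduct_sub, sub_dotProduct, hsymm, hw]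
  ring

theorem PosDef.unique_min_of_eq_quadratic [DecidableEq n] {A : Matrix n n ℝ} (hA : A.PosDef)
    (z : n → ℝ) (c : ℝ) (f : (n → ℝ) → ℝ) (hf : ∀ u, f u = u ⬝ᵥ (A *ᵥ u) / 2 - u ⬝ᵥ z + c)
    (u : n → ℝ) :
    f (A⁻¹ *ᵥ z) ≤ f u ∧ (f u = f (A⁻¹ *ᵥ z) → u = A⁻¹ *ᵥ z) := by
  set w := A⁻¹ *ᵥ z
  have hw : A *ᵥ w = z := by
    rw [mulVec_mulVec, mul_nonsing_inv A ((isUnit_iff_isUnit_det A).mp hA.isUnit), one_mulVec]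
  have hgap : f u = f w + (u - w) ⬝ᵥ (A *ᵥ (u - w)) / 2 := by
    rw [hf, hf, IsHermitian.quadratic_complete_square hA.isHermitian hw u]
    ring
  have hpos : u ≠ w → 0 < (u - w) ⬝ᵥ (A *ᵥ (u - w)) := fun hne => by
    simpa using hA.dotProduct_mulVec_pos (sub_ne_zero.mpr hne)
  refine ⟨?_, fun heq => by_contra fun hne => by linarith [hpos hne]⟩
  rcases eq_or_ne u w with rfl | hne
  · rfl
  · linarith [hpos hne]

end Matrix

theorem nonit_reweighted_rls_converges_to_batch_general
    (d : ℕ) (b : ℝ) (hb : 0 < b)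
    (x : ℕ → Fin d → ℝ) (y : ℕ → ℝ)
    (hy : ∀ t : ℕ, 1 ≤ t → y t = -1 ∨ y t = 1)
    (nneg npos : ℕ → ℕ)
    (hnneg : ∀ t : ℕ, nneg t = ((Finset.Icc 1 t).filter (fun i => y i = -1)).card)
    (hnpos : ∀ t : ℕ, npos t = ((Finset.Icc 1 t).filter (fun i => y i = 1)).card)
    (Sneg Spos : ℕ → Matrix (Fin d) (Fin d) ℝ) (zneg zpos : ℕ → Fin d → ℝ)
    (hSneg0 : Sneg 0 = 0) (hSpos0 : Spos 0 = 0) (hzneg0 : zneg 0 = 0) (hzpos0 : zpos 0 = 0)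
    (hSneg : ∀ t : ℕ, 1 ≤ t →
      Sneg t = Sneg (t - 1) +
        ((1 - y t) / (2 * (nneg t : ℝ))) • (vecMulVec (x t) (x t) - Sneg (t - 1)))
    (hSpos : ∀ t : ℕ, 1 ≤ t →
      Spos t = Spos (t - 1) +
        ((1 + y t) / (2 * (npos t : ℝ))) • (vecMulVec (x t) (x t) - Spos (t - 1)))
    (hzneg : ∀ t : ℕ, 1 ≤ t →
      zneg t = zneg (t - 1) +
        ((1 - y t) / (2 * (nneg t : ℝ))) • (y t • x t - zneg (t - 1)))
    (hzpos : ∀ t : ℕ, 1 ≤ t →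
      zpos t = zpos (t - 1) +
        ((1 + y t) / (2 * (npos t : ℝ))) • (y t • x t - zpos (t - 1)))
    (w : ℕ → Fin d → ℝ)
    (hw : ∀ t : ℕ,
      w t = (Sneg t + Spos t + b • (1 : Matrix (Fin d) (Fin d) ℝ))⁻¹ *ᵥ (zneg t + zpos t))
    (J : ℕ → (Fin d → ℝ) → ℝ)
    (hJ : ∀ t : ℕ, ∀ u : Fin d → ℝ,
      J t u = (1 / (2 * (nneg t : ℝ))) *
                ∑ i ∈ (Finset.Icc 1 t).filter (fun i => y i = -1), (y i - u ⬝ᵥ x i) ^ 2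
            + (1 / (2 * (npos t : ℝ))) *
                ∑ i ∈ (Finset.Icc 1 t).filter (fun i => y i = 1), (y i - u ⬝ᵥ x i) ^ 2
            + (b / 2) * (u ⬝ᵥ u)) :
    ∀ t : ℕ, 1 ≤ t → 1 ≤ nneg t → 1 ≤ npos t →
      (w t =
        (((nneg t : ℝ))⁻¹ •
            ∑ i ∈ (Finset.Icc 1 t).filter (fun i => y i = -1), vecMulVec (x i) (x i)
          + ((npos t : ℝ))⁻¹ •
            ∑ i ∈ (Finset.Icc 1 t).filter (fun i => y i = 1), vecMulVec (x i) (x i)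
          + b • (1 : Matrix (Fin d) (Fin d) ℝ))⁻¹ *ᵥ
        (((nneg t : ℝ))⁻¹ •
            ∑ i ∈ (Finset.Icc 1 t).filter (fun i => y i = -1), y i • x i
          + ((npos t : ℝ))⁻¹ •
            ∑ i ∈ (Finset.Icc 1 t).filter (fun i => y i = 1), y i • x i)) ∧
      (∀ u : Fin d → ℝ,
        J t (w t) ≤ J t u ∧ (J t u = J t (w t) → u = w t)) := by
  intro t _ _ _
  have hgain_neg (s : ℕ) (hs : 1 ≤ s) := one_sub_div_two_mul_eq_ite (hy s hs) (nneg s)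
  have hgain_pos (s : ℕ) (hs : 1 ≤ s) := one_add_div_two_mul_eq_ite (hy s hs) (npos s)
  have hbatch := hw t
  rw [running_mean_eq_mean _ _ nneg hnneg _ hgain_neg Sneg hSneg0 hSneg,
    running_mean_eq_mean _ _ npos hnpos _ hgain_pos Spos hSpos0 hSpos,
    running_mean_eq_mean _ _ nneg hnneg _ hgain_neg zneg hzneg0 hzneg,
    running_mean_eq_mean _ _ npos hnpos _ hgain_pos zpos hzpos0 hzpos] at hbatch
  refine ⟨hbatch, fun u => ?_⟩
  rw [hbatch]
  set N := (Icc 1 t).filter (fun i => y i = -1)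
  set P := (Icc 1 t).filter (fun i => y i = 1)
  refine PosDef.unique_min_of_eq_quadratic ?_ _
    ((∑ i ∈ N, y i ^ 2) / (2 * nneg t) + (∑ i ∈ P, y i ^ 2) / (2 * npos t)) (J t) (fun v => ?_) u
  · refine PosDef.posSemidef_add (.add ?_ ?_) (PosDef.one.smul hb) <;>
      exact (posSemidef_sum_vecMulVec_self _ x).smul (by positivity)
  · rw [hJ, sum_sq_sub_dotProduct, sum_sq_sub_dotProduct]
    simp only [add_mulVec, smul_mulVec, one_mulVec, dotProduct_add, dotProduct_smul, smul_eq_mul]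
    ring

/-- For every `t ≥ 1` with `n_t⁻ ≥ 1` and `n_t⁺ ≥ 1`, the recursively computed weight
vector `w t = (Sneg t + Spos t + b·I)⁻¹ (zneg t + zpos t)` equals the batch
total-error-rate solution computed from all samples seen up to time `t`, and
consequently `w t` is the unique global minimizer of the time-indexed
total-error-rate objective `J t`. -/
theorem nonit_reweighted_rls_converges_to_batch
    (d : ℕ) (hd : 0 < d) (b : ℝ) (hb : 0 < b)
    (x : ℕ → Fin d → ℝ) (y : ℕ → ℝ)
    (hy : ∀ t : ℕ, 1 ≤ t → y t = -1 ∨ y t = 1)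
    (nneg npos : ℕ → ℕ)
    (hnneg : ∀ t : ℕ, nneg t = ((Finset.Icc 1 t).filter (fun i => y i = -1)).card)
    (hnpos : ∀ t : ℕ, npos t = ((Finset.Icc 1 t).filter (fun i => y i = 1)).card)
    (Sneg Spos : ℕ → Matrix (Fin d) (Fin d) ℝ) (zneg zpos : ℕ → Fin d → ℝ)
    (hSneg0 : Sneg 0 = 0) (hSpos0 : Spos 0 = 0) (hzneg0 : zneg 0 = 0) (hzpos0 : zpos 0 = 0)
    (hSneg : ∀ t : ℕ, 1 ≤ t →
      Sneg t = Sneg (t - 1) +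
        ((1 - y t) / (2 * (nneg t : ℝ))) • (vecMulVec (x t) (x t) - Sneg (t - 1)))
    (hSpos : ∀ t : ℕ, 1 ≤ t →
      Spos t = Spos (t - 1) +
        ((1 + y t) / (2 * (npos t : ℝ))) • (vecMulVec (x t) (x t) - Spos (t - 1)))
    (hzneg : ∀ t : ℕ, 1 ≤ t →
      zneg t = zneg (t - 1) +
        ((1 - y t) / (2 * (nneg t : ℝ))) • (y t • x t - zneg (t - 1)))
    (hzpos : ∀ t : ℕ, 1 ≤ t →
      zpos t = zpos (t - 1) +
        ((1 + y t) / (2 * (npos t : ℝ))) • (y t • x t - zpos (t - 1)))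
    (w : ℕ → Fin d → ℝ)
    (hw : ∀ t : ℕ,
      w t = (Sneg t + Spos t + b • (1 : Matrix (Fin d) (Fin d) ℝ))⁻¹ *ᵥ (zneg t + zpos t))
    (J : ℕ → (Fin d → ℝ) → ℝ)
    (hJ : ∀ t : ℕ, ∀ u : Fin d → ℝ,
      J t u = (1 / (2 * (nneg t : ℝ))) *
                ∑ i ∈ (Finset.Icc 1 t).filter (fun i => y i = -1), (y i - u ⬝ᵥ x i) ^ 2
            + (1 / (2 * (npos t : ℝ))) *
                ∑ i ∈ (Finset.Icc 1 t).filter (fun i => y i = 1), (y i - u ⬝ᵥ x i) ^ 2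
            + (b / 2) * (u ⬝ᵥ u)) :
    ∀ t : ℕ, 1 ≤ t → 1 ≤ nneg t → 1 ≤ npos t →
      (w t =
        (((nneg t : ℝ))⁻¹ •
            ∑ i ∈ (Finset.Icc 1 t).filter (fun i => y i = -1), vecMulVec (x i) (x i)
          + ((npos t : ℝ))⁻¹ •
            ∑ i ∈ (Finset.Icc 1 t).filter (fun i => y i = 1), vecMulVec (x i) (x i)
          + b • (1 : Matrix (Fin d) (Fin d) ℝ))⁻¹ *ᵥ
        (((nneg t : ℝ))⁻¹ •
            ∑ i ∈ (Finset.Icc 1 t).filter (fun i => y i = -1), y i • x i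
          + ((npos t : ℝ))⁻¹ •
            ∑ i ∈ (Finset.Icc 1 t).filter (fun i => y i = 1), y i • x i)) ∧
      (∀ u : Fin d → ℝ,
        J t (w t) ≤ J t u ∧ (J t u = J t (w t) → u = w t)) :=
  nonit_reweighted_rls_converges_to_batch_general d b hb x y hy nneg npos hnneg hnpos Sneg Spos zneg
    zpos hSneg0 hSpos0 hzneg0 hzpos0 hSneg hSpos hzneg hzpos w hw J hJ
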